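/- arXiv:1506.00293 — 2 statements merged into one kernel-verified Lean document; each statement's English description precedes it below -/
import Mathlib

section
/- Frank–Wolfe convergence: let Ψ be convex and differentiable on a compact convex set Δ ⊂ ℝ^E with L-Lipschitz gradient in the 2-norm, let R² = max_{f,g ∈ Δ} ‖f - g‖₂², and define the Frank–Wolfe iterates f^{k+1} = (1 - γ_k) f^k + γ_k y^k with y^k ∈ argmin_{y ∈ Δ} ⟨∇Ψ(f^k), y⟩, where γ_0 = 1 and γ_k = 2/(k+1) for k ≥ 1. Then for all N ≥ 1, Ψ(f^N) - min_{f ∈ Δ} Ψ(f) ≤ 2LR²/(N+1). -/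
open Finset

section FrankWolfeAux
open Set intervalIntegral

variable {n : ℕ}

/-- derivative of `t ↦ Ψ (a + t • v)` -/
lemma fw_hasDerivAt {Ψ : EuclideanSpace ℝ (Fin n) → ℝ} (hΨdiff : Differentiable ℝ Ψ)
    (a v : EuclideanSpace ℝ (Fin n)) (t : ℝ) :
    HasDerivAt (fun s : ℝ => Ψ (a + s • v)) (fderiv ℝ Ψ (a + t • v) v) t := by
  have h1 : HasDerivAt (fun s : ℝ => a + s • v) v t := by
    simpa using ((hasDerivAt_id t).smul_const v).const_add a
  exact ((hΨdiff (a + t • v)).hasFDerivAt.comp_hasDerivAt t h1)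

/-- Descent lemma. -/
lemma fw_descent {Δ : Set (EuclideanSpace ℝ (Fin n))} (hΔconv : Convex ℝ Δ)
    {Ψ : EuclideanSpace ℝ (Fin n) → ℝ} (hΨdiff : Differentiable ℝ Ψ) {L : ℝ}
    (hL : ∀ a ∈ Δ, ∀ b ∈ Δ, ‖fderiv ℝ Ψ a - fderiv ℝ Ψ b‖ ≤ L * ‖a - b‖)
    {a b : EuclideanSpace ℝ (Fin n)} (ha : a ∈ Δ) (hb : b ∈ Δ) :
    Ψ b ≤ Ψ a + fderiv ℝ Ψ a (b - a) + L / 2 * ‖b - a‖ ^ 2 := by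
  set v := b - a with hv
  set φ : ℝ → ℝ := fun t => fderiv ℝ Ψ (a + t • v) v with hφ
  have hmem : ∀ t ∈ Icc (0:ℝ) 1, a + t • v ∈ Δ := fun t ht => hΔconv.add_smul_sub_mem ha hb ht
  -- Lipschitz on Icc 0 1
  have hdist : ∀ s ∈ Icc (0:ℝ) 1, ∀ t ∈ Icc (0:ℝ) 1,
      dist (φ s) (φ t) ≤ (L * ‖v‖ ^ 2).toNNReal * dist s t := by
    intro s hs t ht
    have h1 : φ s - φ t = (fderiv ℝ Ψ (a + s • v) - fderiv ℝ Ψ (a + t • v)) v := by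
      simp [hφ]
    have h2 : ‖(fderiv ℝ Ψ (a + s • v) - fderiv ℝ Ψ (a + t • v)) v‖
        ≤ ‖fderiv ℝ Ψ (a + s • v) - fderiv ℝ Ψ (a + t • v)‖ * ‖v‖ :=
      ContinuousLinearMap.le_opNorm _ _
    have h3 : ‖fderiv ℝ Ψ (a + s • v) - fderiv ℝ Ψ (a + t • v)‖
        ≤ L * (|s - t| * ‖v‖) := by
      have := hL _ (hmem s hs) _ (hmem t ht)
      have he : (a + s • v) - (a + t • v) = (s - t) • v := by
        rw [sub_smul]; abel
      simpa [he, norm_smul] using this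
    have h4 : dist (φ s) (φ t) ≤ L * ‖v‖ ^ 2 * |s - t| := by
      rw [Real.dist_eq, h1.symm] at *
      calc |φ s - φ t| ≤ ‖fderiv ℝ Ψ (a + s • v) - fderiv ℝ Ψ (a + t • v)‖ * ‖v‖ := by
            rw [h1]; exact h2
        _ ≤ L * (|s - t| * ‖v‖) * ‖v‖ := mul_le_mul_of_nonneg_right h3 (norm_nonneg _)
        _ = L * ‖v‖ ^ 2 * |s - t| := by ring
    calc dist (φ s) (φ t) ≤ L * ‖v‖ ^ 2 * |s - t| := h4
      _ ≤ (L * ‖v‖ ^ 2).toNNReal * |s - t| := by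
          gcongr
          exact Real.le_coe_toNNReal _
      _ = (L * ‖v‖ ^ 2).toNNReal * dist s t := by rw [Real.dist_eq]
  have hlip : LipschitzOnWith (L * ‖v‖ ^ 2).toNNReal φ (Icc 0 1) :=
    LipschitzOnWith.of_dist_le_mul fun x hx y hy => hdist x hx y hy
  have hcont : ContinuousOn φ (Icc 0 1) := hlip.continuousOn
  have hint : IntervalIntegrable φ MeasureTheory.volume 0 1 := by
    apply ContinuousOn.intervalIntegrable
    rwa [uIcc_of_le (by norm_num : (0:ℝ) ≤ 1)]
  have hderiv : ∀ t ∈ uIcc (0:ℝ) 1, HasDerivAt (fun s : ℝ => Ψ (a + s • v)) (φ t) t :=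
    fun t _ => fw_hasDerivAt hΨdiff a v t
  have key : Ψ b - Ψ a = ∫ t in (0:ℝ)..1, φ t := by
    have := intervalIntegral.integral_eq_sub_of_hasDerivAt hderiv hint
    have e1 : a + (1:ℝ) • v = b := by rw [one_smul, hv]; abel
    have e0 : a + (0:ℝ) • v = a := by simp
    rw [this, e1, e0]
  have hbound : ∀ t ∈ Icc (0:ℝ) 1, φ t ≤ φ 0 + L * ‖v‖ ^ 2 * t := by
    intro t ht
    have h1 : φ t - φ 0 = (fderiv ℝ Ψ (a + t • v) - fderiv ℝ Ψ (a + 0 • v)) v := by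
      simp [hφ]
    have h2 : ‖(fderiv ℝ Ψ (a + t • v) - fderiv ℝ Ψ (a + 0 • v)) v‖
        ≤ ‖fderiv ℝ Ψ (a + t • v) - fderiv ℝ Ψ (a + 0 • v)‖ * ‖v‖ :=
      ContinuousLinearMap.le_opNorm _ _
    have h3 : ‖fderiv ℝ Ψ (a + t • v) - fderiv ℝ Ψ (a + 0 • v)‖ ≤ L * (t * ‖v‖) := by
      have := hL _ (hmem t ht) _ (hmem 0 (by norm_num))
      have he : (a + t • v) - (a + (0:ℝ) • v) = t • v := by
        module
      have habs : |t| = t := abs_of_nonneg ht.1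
      simpa [he, norm_smul, habs] using this
    have : φ t - φ 0 ≤ L * (t * ‖v‖) * ‖v‖ := by
      calc φ t - φ 0 ≤ |φ t - φ 0| := le_abs_self _
        _ = ‖(fderiv ℝ Ψ (a + t • v) - fderiv ℝ Ψ (a + 0 • v)) v‖ := by rw [h1]; rfl
        _ ≤ ‖fderiv ℝ Ψ (a + t • v) - fderiv ℝ Ψ (a + 0 • v)‖ * ‖v‖ := h2
        _ ≤ L * (t * ‖v‖) * ‖v‖ := mul_le_mul_of_nonneg_right h3 (norm_nonneg _)
    nlinarith [this]
  have hint2 : IntervalIntegrable (fun t => φ 0 + L * ‖v‖ ^ 2 * t) MeasureTheory.volume 0 1 := by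
    exact (continuous_const.add ((continuous_const.mul continuous_id))).intervalIntegrable 0 1
  have hle : (∫ t in (0:ℝ)..1, φ t) ≤ ∫ t in (0:ℝ)..1, (φ 0 + L * ‖v‖ ^ 2 * t) := by
    apply intervalIntegral.integral_mono_on (by norm_num) hint hint2 hbound
  have hval : (∫ t in (0:ℝ)..1, (φ 0 + L * ‖v‖ ^ 2 * t)) = φ 0 + L / 2 * ‖v‖ ^ 2 := by
    rw [intervalIntegral.integral_add (intervalIntegrable_const)
        ((intervalIntegral.intervalIntegrable_id).const_mul _),
      intervalIntegral.integral_const, intervalIntegral.integral_const_mul, integral_id]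
    simp
    ring
  have hφ0 : φ 0 = fderiv ℝ Ψ a v := by simp [hφ]
  have := key ▸ (hle.trans_eq hval)
  rw [hφ0] at this
  linarith

/-- Gradient inequality for convex functions. -/
lemma fw_grad {Δ : Set (EuclideanSpace ℝ (Fin n))} (hΔconv : Convex ℝ Δ)
    {Ψ : EuclideanSpace ℝ (Fin n) → ℝ} (hΨconv : ConvexOn ℝ Δ Ψ)
    (hΨdiff : Differentiable ℝ Ψ)
    {x z : EuclideanSpace ℝ (Fin n)} (hx : x ∈ Δ) (hz : z ∈ Δ) :
    fderiv ℝ Ψ x (z - x) ≤ Ψ z - Ψ x := by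
  set g : ℝ → ℝ := fun t => Ψ (x + t • (z - x)) with hg
  have hgconv : ConvexOn ℝ (Icc (0:ℝ) 1) g := by
    have h1 : ConvexOn ℝ ((AffineMap.lineMap x z : ℝ →ᵃ[ℝ] _) ⁻¹' Δ)
        (Ψ ∘ (AffineMap.lineMap x z : ℝ →ᵃ[ℝ] _)) := hΨconv.comp_affineMap _
    have h2 : ConvexOn ℝ (Icc (0:ℝ) 1) (Ψ ∘ (AffineMap.lineMap x z : ℝ →ᵃ[ℝ] _)) :=
      h1.subset (fun t ht => hΔconv.lineMap_mem hx hz ht) (convex_Icc 0 1)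
    convert h2 using 1
    funext t
    simp [hg, AffineMap.lineMap_apply]
    congr 1
    module
  have hgd : HasDerivAt g (fderiv ℝ Ψ x (z - x)) 0 := by
    have := fw_hasDerivAt hΨdiff x (z - x) 0
    simpa using this
  have := hgconv.le_slope_of_hasDerivAt (by norm_num : (0:ℝ) ∈ Icc (0:ℝ) 1)
    (by norm_num : (1:ℝ) ∈ Icc (0:ℝ) 1) one_pos hgd
  have hslope : slope g 0 1 = Ψ z - Ψ x := by
    rw [slope_def_field]
    have e1 : x + (1:ℝ) • (z - x) = z := by rw [one_smul]; abel
    have e0 : x + (0:ℝ) • (z - x) = x := by simp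
    simp [hg, e1, e0]
  rw [hslope] at this
  exact this

end FrankWolfeAux

/-- Frank–Wolfe convergence rate: `Ψ(f^N) - Ψ* ≤ 2 L R² / (N+1)`. -/
theorem frank_wolfe_rate
    {n : ℕ} {Δ : Set (EuclideanSpace ℝ (Fin n))}
    (hΔconv : Convex ℝ Δ) (hΔcomp : IsCompact Δ) (hΔne : Δ.Nonempty)
    (Ψ : EuclideanSpace ℝ (Fin n) → ℝ)
    (hΨconv : ConvexOn ℝ Δ Ψ) (hΨdiff : Differentiable ℝ Ψ)
    (L : ℝ)
    (hL : ∀ a ∈ Δ, ∀ b ∈ Δ, ‖fderiv ℝ Ψ a - fderiv ℝ Ψ b‖ ≤ L * ‖a - b‖)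
    (R : ℝ)
    (hR : IsGreatest {r : ℝ | ∃ a ∈ Δ, ∃ b ∈ Δ, r = ‖a - b‖ ^ 2} (R ^ 2))
    (γ : ℕ → ℝ) (hγ : ∀ k, γ k = 2 / ((k : ℝ) + 1))
    (f y : ℕ → EuclideanSpace ℝ (Fin n))
    (hf0 : f 0 ∈ Δ)
    (hy : ∀ k, y k ∈ Δ ∧ ∀ z ∈ Δ, fderiv ℝ Ψ (f k) (y k) ≤ fderiv ℝ Ψ (f k) z)
    (hf1 : f 1 = y 0)
    (hfk : ∀ k ≥ 1, f (k + 1) = (1 - γ k) • f k + γ k • y k)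
    (fstar : EuclideanSpace ℝ (Fin n)) (hstar : fstar ∈ Δ)
    (hmin : ∀ z ∈ Δ, Ψ fstar ≤ Ψ z)
    (N : ℕ) (hN : 1 ≤ N) :
    Ψ (f N) - Ψ fstar ≤ 2 * L * R ^ 2 / ((N : ℝ) + 1) := by
  have hγnonneg : ∀ k, 0 ≤ γ k := by
    intro k; rw [hγ]; positivity
  have hγle : ∀ k, 1 ≤ k → γ k ≤ 1 := by
    intro k hk
    rw [hγ, div_le_one (by positivity)]
    have : (1:ℝ) ≤ (k:ℝ) := by exact_mod_cast hk
    linarith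
  have hfΔ : ∀ k, f k ∈ Δ := by
    intro k
    induction k using Nat.strong_induction_on with
    | _ k ih =>
      match k with
      | 0 => exact hf0
      | 1 => rw [hf1]; exact (hy 0).1
      | (m+2) =>
        rw [hfk (m+1) (by omega)]
        exact hΔconv (ih (m+1) (by omega)) (hy (m+1)).1
          (by linarith [hγle (m+1) (by omega)]) (hγnonneg (m+1)) (by ring)
  have hR2 : 0 ≤ R ^ 2 := by
    obtain ⟨a, ha, b, hb, hab⟩ := hR.1
    rw [hab]; positivity
  have hcase : R ^ 2 = 0 ∨ 0 ≤ L := by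
    rcases eq_or_lt_of_le hR2 with h | h
    · exact Or.inl h.symm
    · right
      obtain ⟨a, ha, b, hb, hab⟩ := hR.1
      have hne : 0 < ‖a - b‖ := by nlinarith [norm_nonneg (a - b)]
      have := hL a ha b hb
      nlinarith [norm_nonneg (fderiv ℝ Ψ a - fderiv ℝ Ψ b)]
  have hLR : 0 ≤ L * R ^ 2 := by
    rcases hcase with h | h
    · rw [h, mul_zero]
    · exact mul_nonneg h hR2
  have hLnorm : ∀ a ∈ Δ, ∀ b ∈ Δ, L * ‖a - b‖ ^ 2 ≤ L * R ^ 2 := by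
    intro a ha b hb
    rcases hcase with h | h
    · have h1 : ‖a - b‖ ^ 2 ≤ R ^ 2 := hR.2 ⟨a, ha, b, hb, rfl⟩
      have h2 : ‖a - b‖ ^ 2 = 0 := le_antisymm (h ▸ h1) (by positivity)
      rw [h2, h]
    · exact mul_le_mul_of_nonneg_left (hR.2 ⟨a, ha, b, hb, rfl⟩) h
  have hkey : ∀ k, fderiv ℝ Ψ (f k) (y k - f k) ≤ Ψ fstar - Ψ (f k) := by
    intro k
    have h1 : fderiv ℝ Ψ (f k) (y k) ≤ fderiv ℝ Ψ (f k) fstar := (hy k).2 fstar hstar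
    have h2 : fderiv ℝ Ψ (f k) (fstar - f k) ≤ Ψ fstar - Ψ (f k) :=
      fw_grad hΔconv hΨconv hΨdiff (hfΔ k) hstar
    have e1 : fderiv ℝ Ψ (f k) (y k - f k)
        = fderiv ℝ Ψ (f k) (y k) - fderiv ℝ Ψ (f k) (f k) := map_sub _ _ _
    have e2 : fderiv ℝ Ψ (f k) (fstar - f k)
        = fderiv ℝ Ψ (f k) fstar - fderiv ℝ Ψ (f k) (f k) := map_sub _ _ _
    linarith
  have hbase : Ψ (f 1) - Ψ fstar ≤ L / 2 * R ^ 2 := by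
    have hd := fw_descent hΔconv hΨdiff hL hf0 (hy 0).1
    have h2 := hkey 0
    have h3 : L * ‖y 0 - f 0‖ ^ 2 ≤ L * R ^ 2 := hLnorm _ (hy 0).1 _ hf0
    rw [hf1]
    nlinarith [hd, h2, h3]
  have hstep : ∀ k, 1 ≤ k → Ψ (f (k+1)) - Ψ fstar
      ≤ (1 - γ k) * (Ψ (f k) - Ψ fstar) + (γ k) ^ 2 / 2 * (L * R ^ 2) := by
    intro k hk
    have he : f (k+1) - f k = γ k • (y k - f k) := by
      rw [hfk k hk]; module
    have hd := fw_descent hΔconv hΨdiff hL (hfΔ k) (hfΔ (k+1))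
    have e1 : fderiv ℝ Ψ (f k) (f (k+1) - f k) = γ k * fderiv ℝ Ψ (f k) (y k - f k) := by
      rw [he, map_smul, smul_eq_mul]
    have e2 : ‖f (k+1) - f k‖ ^ 2 = (γ k) ^ 2 * ‖y k - f k‖ ^ 2 := by
      rw [he, norm_smul, mul_pow, Real.norm_eq_abs, sq_abs]
    rw [e1, e2] at hd
    have h2 := hkey k
    have h4 : γ k * fderiv ℝ Ψ (f k) (y k - f k) ≤ γ k * (Ψ fstar - Ψ (f k)) :=
      mul_le_mul_of_nonneg_left h2 (hγnonneg k)
    have h3 : L * ‖y k - f k‖ ^ 2 ≤ L * R ^ 2 := hLnorm _ (hy k).1 _ (hfΔ k)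
    have h6 : (γ k) ^ 2 / 2 * (L * ‖y k - f k‖ ^ 2) ≤ (γ k) ^ 2 / 2 * (L * R ^ 2) :=
      mul_le_mul_of_nonneg_left h3 (by positivity)
    have e3 : L / 2 * ((γ k) ^ 2 * ‖y k - f k‖ ^ 2)
        = (γ k) ^ 2 / 2 * (L * ‖y k - f k‖ ^ 2) := by ring
    rw [e3] at hd
    linarith
  induction N, hN using Nat.le_induction with
  | base =>
    have : (((1:ℕ):ℝ) + 1) = 2 := by norm_num
    rw [this]
    rw [show (2:ℝ) * L * R ^ 2 / 2 = L * R ^ 2 by ring]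
    linarith [hbase, hLR]
  | succ k hk ih =>
    have hs := hstep k hk
    have h1γ : 0 ≤ 1 - γ k := by linarith [hγle k hk]
    have h5 : (1 - γ k) * (Ψ (f k) - Ψ fstar)
        ≤ (1 - γ k) * (2 * L * R ^ 2 / ((k:ℝ) + 1)) := mul_le_mul_of_nonneg_left ih h1γ
    have hK : (1:ℝ) ≤ (k:ℝ) := by exact_mod_cast hk
    have hK1 : (0:ℝ) < (k:ℝ) + 1 := by linarith
    have hK2 : (0:ℝ) < (k:ℝ) + 2 := by linarith
    have harith : (1 - γ k) * (2 * L * R ^ 2 / ((k:ℝ) + 1))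
        + (γ k) ^ 2 / 2 * (L * R ^ 2) ≤ 2 * L * R ^ 2 / ((k:ℝ) + 2) := by
      rw [hγ]
      have hne1 : ((k:ℝ) + 1) ≠ 0 := hK1.ne'
      have hne2 : ((k:ℝ) + 2) ≠ 0 := hK2.ne'
      have key : 2 * L * R ^ 2 / ((k:ℝ) + 2)
          - ((1 - 2 / ((k:ℝ) + 1)) * (2 * L * R ^ 2 / ((k:ℝ) + 1))
            + (2 / ((k:ℝ) + 1)) ^ 2 / 2 * (L * R ^ 2))
          = (L * R ^ 2) * (2 / (((k:ℝ) + 1) ^ 2 * ((k:ℝ) + 2))) := by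
        field_simp
        ring
      have h7 : 0 ≤ (L * R ^ 2) * (2 / (((k:ℝ) + 1) ^ 2 * ((k:ℝ) + 2))) :=
        mul_nonneg hLR (by positivity)
      linarith
    have hcast : (((k+1:ℕ)):ℝ) + 1 = (k:ℝ) + 2 := by push_cast; ring
    rw [hcast]
    linarith
end

section
/- Lagrangian duality for the stable dynamic model: min_{f ∈ Δ, f ≤ f̄} ∑_{e∈E} f_e t̄_e = - min_{t ≥ t̄} { -∑_{w∈W} d_w T_w(t) + ⟨f̄, t - t̄⟩ }, where Δ = {Θx : x ∈ X} is the polytope of feasible edge flows and T_w(t) = min_{p∈P_w} ∑_e δ_{ep} t_e, assuming the primal feasible set {f ∈ Δ : f ≤ f̄} is nonempty. -/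
open Finset

private lemma combo_lt {a b p q u v : ℝ} (ha : 0 ≤ a) (hb : 0 ≤ b) (hab : a + b = 1)
    (h1 : p < u) (h2 : q < v) : a * p + b * q < a * u + b * v := by
  rcases eq_or_lt_of_le ha with h | h
  · have hb1 : b = 1 := by linarith
    simp only [← h, hb1, zero_mul, one_mul, zero_add]
    exact h2
  · have h3 : a * p < a * u := mul_lt_mul_of_pos_left h1 h
    have h4 : b * q ≤ b * v := mul_le_mul_of_nonneg_left h2.le hb
    linarith

private lemma le_of_forall_add_mul_lt {a K s : ℝ} (h : ∀ δ : ℝ, 0 < δ → a + δ * K < s) :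
    a ≤ s := by
  by_contra hc
  push_neg at hc
  rcases le_or_gt 0 K with hK | hK
  · have := h 1 one_pos; nlinarith
  · have hδ : (0:ℝ) < (a - s) / (-2 * K) := by
      apply div_pos (by linarith) (by linarith)
    have h2 := h _ hδ
    have h3 : (a - s) / (-2 * K) * K = (s - a) / 2 := by
      rw [div_mul_eq_mul_div, div_eq_iff (by linarith : (-2:ℝ) * K ≠ 0)]
      ring
    rw [h3] at h2
    linarith

private lemma nonpos_of_forall_add_mul_lt {a K s : ℝ} (h : ∀ M : ℝ, 0 < M → a + M * K < s) :
    K ≤ 0 := by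
  by_contra hc
  push_neg at hc
  have h1 := h 1 one_pos
  have h2 := h ((s - a) / K) (div_pos (by linarith) hc)
  rw [div_mul_cancel₀ _ (ne_of_gt hc)] at h2
  linarith

/-- Lagrangian duality for the stable dynamic model:
`min_{f ∈ Δ, f ≤ f̄} ⟨f, t̄⟩ = - min_{t ≥ t̄} { -∑_w d_w T_w(t) + ⟨f̄, t - t̄⟩ }`. -/
theorem stable_dynamics_duality
    {E P W : Type*} [Fintype E] [Fintype P] [Fintype W]
    (δ : E → P → ℝ) (hδ : ∀ e p, δ e p = 0 ∨ δ e p = 1)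
    (pw : W → Finset P) (hne : ∀ w, (pw w).Nonempty)
    (hdisj : ∀ w w', w ≠ w' → Disjoint (pw w) (pw w'))
    (hcover : ∀ p : P, ∃ w, p ∈ pw w)
    (d : W → ℝ) (hd : ∀ w, 0 < d w)
    (tbar fbar : E → ℝ) (htbar : ∀ e, 0 < tbar e) (hfbar : ∀ e, 0 < fbar e)
    (f : (P → ℝ) → E → ℝ) (hf : ∀ x e, f x e = ∑ p, δ e p * x p)
    (X : Set (P → ℝ))
    (hX : X = {x | (∀ p, 0 ≤ x p) ∧ ∀ w, ∑ p ∈ pw w, x p = d w})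
    (Tw : (E → ℝ) → W → ℝ)
    (hTw : ∀ t w, Tw t w = (pw w).inf' (hne w) (fun p => ∑ e, δ e p * t e))
    (hfeas : ∃ x ∈ X, ∀ e, f x e ≤ fbar e) :
    sInf {v : ℝ | ∃ x ∈ X, (∀ e, f x e ≤ fbar e) ∧ v = ∑ e, f x e * tbar e}
      = - sInf {v : ℝ | ∃ t : E → ℝ, (∀ e, tbar e ≤ t e) ∧
          v = -∑ w, d w * Tw t w + ∑ e, fbar e * (t e - tbar e)} := by
  classical
  obtain ⟨x₀, hx₀X, hx₀f⟩ := hfeas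
  set c : (P → ℝ) → ℝ := fun x => ∑ e, f x e * tbar e with hc
  set len : (E → ℝ) → P → ℝ := fun t p => ∑ e, δ e p * t e with hlen
  have hδ0 : ∀ e p, 0 ≤ δ e p := fun e p => by rcases hδ e p with h | h <;> simp [h]
  -- basic facts about X
  have hXnn : ∀ x ∈ X, ∀ p, 0 ≤ x p := fun x hx => by rw [hX] at hx; exact hx.1
  have hXsum : ∀ x ∈ X, ∀ w, ∑ p ∈ pw w, x p = d w := fun x hx => by
    rw [hX] at hx; exact hx.2
  have hfnn : ∀ x ∈ X, ∀ e, 0 ≤ f x e := fun x hx e => by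
    rw [hf]; exact Finset.sum_nonneg fun p _ => mul_nonneg (hδ0 e p) (hXnn x hx p)
  have hcnn : ∀ x ∈ X, 0 ≤ c x := fun x hx =>
    Finset.sum_nonneg fun e _ => mul_nonneg (hfnn x hx e) (htbar e).le
  -- linearity of f
  have hflin : ∀ (a b : ℝ) (x y : P → ℝ) (e : E),
      f (a • x + b • y) e = a * f x e + b * f y e := by
    intro a b x y e
    simp only [hf, Finset.mul_sum, ← Finset.sum_add_distrib]
    refine Finset.sum_congr rfl fun p _ => ?_
    simp [Pi.add_apply, Pi.smul_apply, smul_eq_mul]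
    ring
  -- inner product swap
  have hswap : ∀ (x : P → ℝ) (t : E → ℝ), ∑ e, f x e * t e = ∑ p, x p * len t p := by
    intro x t
    simp only [hf, Finset.sum_mul]
    rw [Finset.sum_comm]
    refine Finset.sum_congr rfl fun p _ => ?_
    rw [hlen]
    simp only [Finset.mul_sum]
    refine Finset.sum_congr rfl fun e _ => ?_
    ring
  -- partition of paths
  have hpart : ∀ g : P → ℝ, ∑ p, g p = ∑ w, ∑ p ∈ pw w, g p := by
    intro g
    have huniv : (Finset.univ : Finset P) = Finset.univ.biUnion pw := by
      ext p
      simp only [Finset.mem_univ, Finset.mem_biUnion, true_iff, true_and]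
      obtain ⟨w, hw⟩ := hcover p
      exact ⟨w, hw⟩
    rw [huniv, Finset.sum_biUnion]
    intro w _ w' _ hww'
    exact hdisj w w' hww'
  -- lower bound for flows in X
  have hlb : ∀ x ∈ X, ∀ t : E → ℝ, ∑ w, d w * Tw t w ≤ ∑ p, x p * len t p := by
    intro x hx t
    rw [hpart (fun p => x p * len t p)]
    refine Finset.sum_le_sum fun w _ => ?_
    calc d w * Tw t w = ∑ p ∈ pw w, x p * Tw t w := by
          rw [← Finset.sum_mul, hXsum x hx w]
      _ ≤ ∑ p ∈ pw w, x p * len t p := by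
          refine Finset.sum_le_sum fun p hp => ?_
          refine mul_le_mul_of_nonneg_left ?_ (hXnn x hx p)
          rw [hTw]
          exact Finset.inf'_le _ hp
  -- flow achieving the lower bound
  have hmin : ∀ t : E → ℝ, ∃ x ∈ X, ∑ p, x p * len t p = ∑ w, d w * Tw t w := by
    intro t
    choose pm hpm hval using fun w => Finset.exists_mem_eq_inf' (hne w) (len t)
    refine ⟨fun p => ∑ w, if p = pm w then d w else 0, ?_, ?_⟩
    · rw [hX]
      constructor
      · intro p
        refine Finset.sum_nonneg fun w _ => ?_
        split <;> simp [le_of_lt (hd _)]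
      · intro w'
        rw [Finset.sum_comm]
        have : ∀ w, ∑ p ∈ pw w', (if p = pm w then d w else 0) =
            if pm w ∈ pw w' then d w else 0 := fun w => Finset.sum_ite_eq' (pw w') (pm w) _
        rw [Finset.sum_congr rfl fun w _ => this w]
        rw [Finset.sum_eq_single w']
        · rw [if_pos (hpm w')]
        · intro w _ hww'
          rw [if_neg]
          exact fun hmem => (Finset.disjoint_left.mp (hdisj w w' hww') (hpm w)) hmem
        · intro h; exact absurd (Finset.mem_univ w') h
    · have h1 : ∀ p, (∑ w, if p = pm w then d w else 0) * len t p
          = ∑ w, if p = pm w then d w * len t p else 0 := by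
        intro p
        rw [Finset.sum_mul]
        exact Finset.sum_congr rfl fun w _ => by split <;> simp
      rw [Finset.sum_congr rfl fun p _ => h1 p, Finset.sum_comm]
      refine Finset.sum_congr rfl fun w _ => ?_
      rw [Finset.sum_ite_eq' Finset.univ (pm w) (fun p => d w * len t p),
        if_pos (Finset.mem_univ _), hTw, hval w]
  -- the perturbed primal value
  set Se : ℝ → Set ℝ := fun ε => {v | ∃ x ∈ X, (∀ e, f x e ≤ fbar e + ε) ∧ v = c x} with hSe
  set Pe : ℝ → ℝ := fun ε => sInf (Se ε) with hPe
  set S2 : Set ℝ := {v : ℝ | ∃ t : E → ℝ, (∀ e, tbar e ≤ t e) ∧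
      v = -∑ w, d w * Tw t w + ∑ e, fbar e * (t e - tbar e)} with hS2def
  have hS1 : {v : ℝ | ∃ x ∈ X, (∀ e, f x e ≤ fbar e) ∧ v = ∑ e, f x e * tbar e} = Se 0 := by
    ext v
    simp only [hSe, Set.mem_setOf_eq, add_zero, hc]
  have hSene : ∀ ε : ℝ, 0 ≤ ε → (Se ε).Nonempty := by
    intro ε hε
    exact ⟨c x₀, x₀, hx₀X, fun e => le_trans (hx₀f e) (by linarith), rfl⟩
  have hSebdd : ∀ ε : ℝ, BddBelow (Se ε) := by
    intro ε
    refine ⟨0, fun v hv => ?_⟩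
    obtain ⟨x, hx, _, rfl⟩ := hv
    exact hcnn x hx
  have hS2ne : S2.Nonempty := ⟨_, tbar, fun e => le_rfl, rfl⟩
  -- weak duality
  have hweak : ∀ v ∈ S2, -v ≤ Pe 0 := by
    intro v hv
    obtain ⟨t, ht, rfl⟩ := hv
    refine le_csInf (hSene 0 le_rfl) fun b hb => ?_
    obtain ⟨x, hx, hxf, rfl⟩ := hb
    have h1 : ∑ e, f x e * (t e - tbar e) ≤ ∑ e, fbar e * (t e - tbar e) :=
      Finset.sum_le_sum fun e _ => mul_le_mul_of_nonneg_right
        (le_trans (hxf e) (by linarith)) (by linarith [ht e])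
    have h2 : ∑ w, d w * Tw t w ≤ ∑ e, f x e * t e := by
      rw [hswap x t]; exact hlb x hx t
    have h3 : ∑ e, f x e * t e - ∑ e, f x e * (t e - tbar e) = c x := by
      rw [hc, ← Finset.sum_sub_distrib]
      exact Finset.sum_congr rfl fun e _ => by ring
    linarith
  have hS2bdd : BddBelow S2 := ⟨-(Pe 0), fun v hv => by linarith [hweak v hv]⟩
  -- X is compact and convex
  have hXconvex : Convex ℝ X := by
    intro x hx y hy a b ha hb hab
    rw [hX]
    constructor
    · intro p
      have := hXnn x hx p
      have := hXnn y hy p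
      simp only [Pi.add_apply, Pi.smul_apply, smul_eq_mul]
      nlinarith
    · intro w
      simp only [Pi.add_apply, Pi.smul_apply, smul_eq_mul]
      rw [Finset.sum_add_distrib, ← Finset.mul_sum, ← Finset.mul_sum,
        hXsum x hx w, hXsum y hy w]
      nlinarith [hd w]
  have hfc : ∀ e, Continuous (fun x : P → ℝ => f x e) := by
    intro e
    simp only [hf]
    exact continuous_finset_sum _ fun p _ => continuous_const.mul (continuous_apply p)
  have hcc : Continuous c := by
    rw [hc]
    exact continuous_finset_sum _ fun e _ => (hfc e).mul continuous_const
  have hXclosed : IsClosed X := by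
    rw [hX]
    have h1 : IsClosed {x : P → ℝ | ∀ p, 0 ≤ x p} := by
      rw [show {x : P → ℝ | ∀ p, 0 ≤ x p} = ⋂ p, {x | 0 ≤ x p} from by
        ext x; simp [Set.mem_iInter]]
      exact isClosed_iInter fun p => isClosed_le continuous_const (continuous_apply p)
    have h2 : IsClosed {x : P → ℝ | ∀ w, ∑ p ∈ pw w, x p = d w} := by
      rw [show {x : P → ℝ | ∀ w, ∑ p ∈ pw w, x p = d w}
          = ⋂ w, {x | ∑ p ∈ pw w, x p = d w} from by ext x; simp [Set.mem_iInter]]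
      exact isClosed_iInter fun w => isClosed_eq
        (continuous_finset_sum _ fun p _ => continuous_apply p) continuous_const
    rw [Set.setOf_and]
    exact h1.inter h2
  have hXcompact : IsCompact X := by
    apply Metric.isCompact_of_isClosed_isBounded hXclosed
    rw [isBounded_iff_forall_norm_le]
    refine ⟨∑ w, d w, fun x hx => ?_⟩
    have hC : (0:ℝ) ≤ ∑ w, d w := Finset.sum_nonneg fun w _ => (hd w).le
    rw [pi_norm_le_iff_of_nonneg hC]
    intro p
    rw [Real.norm_eq_abs, abs_of_nonneg (hXnn x hx p)]
    obtain ⟨w, hw⟩ := hcover p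
    calc x p ≤ ∑ q ∈ pw w, x q :=
          Finset.single_le_sum (fun q _ => hXnn x hx q) hw
      _ = d w := hXsum x hx w
      _ ≤ ∑ w, d w := Finset.single_le_sum (fun w _ => (hd w).le) (Finset.mem_univ w)
  -- Slater strong duality for the perturbed problem
  have hslater : ∀ ε : ℝ, 0 < ε → ∃ v ∈ S2, v ≤ -(Pe ε) := by
    intro ε hε
    set A : Set ((E → ℝ) × ℝ) :=
      {z | ∃ x ∈ X, (∀ e, f x e - fbar e - ε < z.1 e) ∧ c x < z.2} with hA
    set B : Set ((E → ℝ) × ℝ) := {z | z.1 = 0 ∧ z.2 < Pe ε} with hB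
    have hAconv : Convex ℝ A := by
      rintro z ⟨x, hx, hz1, hz2⟩ z' ⟨x', hx', hz1', hz2'⟩ a b ha hb hab
      refine ⟨a • x + b • x', hXconvex hx hx' ha hb hab, fun e => ?_, ?_⟩
      · have h1 := combo_lt ha hb hab (hz1 e) (hz1' e)
        have h2 : (a • z + b • z').1 e = a * z.1 e + b * z'.1 e := by
          simp [Prod.fst_add, Prod.smul_fst]
        rw [h2, hflin]
        have h3 : a * (f x e - fbar e - ε) + b * (f x' e - fbar e - ε)
            = a * f x e + b * f x' e - fbar e - ε := by
          rw [show a * (f x e - fbar e - ε) + b * (f x' e - fbar e - ε)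
              = a * f x e + b * f x' e - (a + b) * (fbar e + ε) by ring, hab]
          ring
        linarith
      · have h1 := combo_lt ha hb hab hz2 hz2'
        have h2 : (a • z + b • z').2 = a * z.2 + b * z'.2 := by
          simp [Prod.snd_add, Prod.smul_snd]
        have h3 : c (a • x + b • x') = a * c x + b * c x' := by
          rw [hc]
          simp only [hflin, add_mul, Finset.sum_add_distrib, Finset.mul_sum]
          congr 1 <;> exact Finset.sum_congr rfl fun e _ => by ring
        rw [h2, h3]
        exact h1
    have hAopen : IsOpen A := by
      have hsp : A = ⋃ x ∈ X, ((⋂ e, {z : (E → ℝ) × ℝ | f x e - fbar e - ε < z.1 e}) ∩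
          {z : (E → ℝ) × ℝ | c x < z.2}) := by
        ext z
        simp only [hA, Set.mem_setOf_eq, Set.mem_iUnion, Set.mem_inter_iff, Set.mem_iInter]
        tauto
      rw [hsp]
      refine isOpen_biUnion fun x _ => IsOpen.inter ?_ ?_
      · exact isOpen_iInter_of_finite fun e =>
          isOpen_lt continuous_const ((continuous_apply e).comp continuous_fst)
      · exact isOpen_lt continuous_const continuous_snd
    have hBconv : Convex ℝ B := by
      rintro z ⟨hz1, hz2⟩ z' ⟨hz1', hz2'⟩ a b ha hb hab
      constructor
      · have h2 : (a • z + b • z').1 = a • z.1 + b • z'.1 := by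
          simp [Prod.fst_add, Prod.smul_fst]
        rw [h2, hz1, hz1', smul_zero, smul_zero, add_zero]
      · have h2 : (a • z + b • z').2 = a * z.2 + b * z'.2 := by
          simp [Prod.snd_add, Prod.smul_snd]
        have h1 := combo_lt ha hb hab hz2 hz2'
        have h3 : a * Pe ε + b * Pe ε = Pe ε := by rw [← add_mul, hab, one_mul]
        rw [h2]
        linarith
    have hABdisj : Disjoint A B := by
      rw [Set.disjoint_left]
      rintro z ⟨x, hx, hz1, hz2⟩ ⟨hz1', hz2'⟩
      have hfx : ∀ e, f x e ≤ fbar e + ε := by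
        intro e
        have h1 := hz1 e
        rw [hz1'] at h1
        simp only [Pi.zero_apply] at h1
        linarith
      have h2 : Pe ε ≤ c x := csInf_le (hSebdd ε) ⟨x, hx, hfx, rfl⟩
      linarith
    obtain ⟨φ, s, hφA, hφB⟩ := geometric_hahn_banach_open hAconv hAopen hBconv hABdisj
    set τ' : E → ℝ := fun e => φ (Pi.single e 1, 0) with hτ'
    set μ : ℝ := φ (0, 1) with hμdef
    have hrep : ∀ (u : E → ℝ) (r : ℝ), φ (u, r) = (∑ e, u e * τ' e) + r * μ := by
      intro u r
      have h1 : ((u, r) : (E → ℝ) × ℝ)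
          = (∑ e, u e • ((Pi.single e 1 : E → ℝ), (0:ℝ))) + r • ((0 : E → ℝ), (1:ℝ)) := by
        refine Prod.ext ?_ ?_
        · simp only [Prod.fst_add, Prod.fst_sum, Prod.smul_fst, smul_eq_mul, smul_zero]
          have h2 : ∀ e, u e • (Pi.single e (1:ℝ) : E → ℝ) = Pi.single e (u e) := by
            intro e
            rw [← Pi.single_smul, smul_eq_mul, mul_one]
          rw [Finset.sum_congr rfl fun e _ => h2 e, Finset.univ_sum_single]
          simp
        · simp only [Prod.snd_add, Prod.snd_sum, Prod.smul_snd, smul_eq_mul, smul_zero,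
            mul_zero, mul_one]
          simp
      rw [h1, map_add, map_sum]
      simp only [map_smul, smul_eq_mul, hτ', hμdef]
    have hμr : ∀ r : ℝ, r < Pe ε → s ≤ r * μ := by
      intro r hr
      have h1 := hφB (0, r) ⟨rfl, hr⟩
      rw [hrep] at h1
      simpa using h1
    have hμ0 : μ ≤ 0 := by
      by_contra hcμ
      push_neg at hcμ
      have h1 := hμr (min (Pe ε - 1) ((s - 1) / μ))
        (lt_of_le_of_lt (min_le_left _ _) (by linarith))
      have h2 : min (Pe ε - 1) ((s - 1) / μ) * μ ≤ (s - 1) / μ * μ :=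
        mul_le_mul_of_nonneg_right (min_le_right _ _) hcμ.le
      rw [div_mul_cancel₀ _ (ne_of_gt hcμ)] at h2
      linarith
    have hsμ : s ≤ Pe ε * μ := by
      refine le_of_forall_pos_le_add fun δ hδ => ?_
      rcases hμ0.eq_or_lt with h | h
      · have h1 := hμr (Pe ε - 1) (by linarith)
        rw [h, mul_zero] at h1
        rw [h, mul_zero, zero_add]
        linarith
      · have hq : (0:ℝ) < δ / (-μ) := div_pos hδ (by linarith)
        have h1 := hμr (Pe ε - δ / (-μ)) (by linarith)
        have h4 : δ / (-μ) * μ = -δ := by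
          rw [div_mul_eq_mul_div, div_eq_iff (by linarith : (-μ:ℝ) ≠ 0)]
          ring
        have h5 : (Pe ε - δ / (-μ)) * μ = Pe ε * μ + δ := by
          rw [sub_mul, h4]
          ring
        linarith [h5 ▸ h1]
    have hkey : ∀ x ∈ X, (∑ e, (f x e - fbar e - ε) * τ' e) + c x * μ ≤ s := by
      intro x hx
      refine le_of_forall_add_mul_lt (K := (∑ e, τ' e) + μ) fun δ hδ => ?_
      have h1 : φ (fun e => f x e - fbar e - ε + δ, c x + δ) < s := by
        refine hφA _ ⟨x, hx, fun e => ?_, ?_⟩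
        · show f x e - fbar e - ε < f x e - fbar e - ε + δ
          linarith
        · show c x < c x + δ
          linarith
      rw [hrep] at h1
      have h2 : ∑ e, (f x e - fbar e - ε + δ) * τ' e
          = (∑ e, (f x e - fbar e - ε) * τ' e) + δ * ∑ e, τ' e := by
        rw [Finset.mul_sum, ← Finset.sum_add_distrib]
        exact Finset.sum_congr rfl fun e _ => by ring
      rw [h2] at h1
      have h3 : (∑ e, (f x e - fbar e - ε) * τ' e) + c x * μ + δ * ((∑ e, τ' e) + μ)
          = ((∑ e, (f x e - fbar e - ε) * τ' e) + δ * ∑ e, τ' e) + (c x + δ) * μ := by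
        ring
      linarith [h3 ▸ h1]
    have hτ'0 : ∀ e₀, τ' e₀ ≤ 0 := by
      intro e₀
      refine nonpos_of_forall_add_mul_lt
        (a := (∑ e, (f x₀ e - fbar e - ε + 1) * τ' e) + (c x₀ + 1) * μ) (s := s)
        fun M hM => ?_
      have h1 : φ (fun e => f x₀ e - fbar e - ε + 1 + M * (if e = e₀ then 1 else 0),
          c x₀ + 1) < s := by
        refine hφA _ ⟨x₀, hx₀X, fun e => ?_, ?_⟩
        · show f x₀ e - fbar e - ε
            < f x₀ e - fbar e - ε + 1 + M * (if e = e₀ then 1 else 0)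
          have h0 : (0:ℝ) ≤ if e = e₀ then (1:ℝ) else 0 := by split <;> norm_num
          nlinarith
        · show c x₀ < c x₀ + 1
          linarith
      rw [hrep] at h1
      have h2 : ∑ e, (f x₀ e - fbar e - ε + 1 + M * (if e = e₀ then 1 else 0)) * τ' e
          = (∑ e, (f x₀ e - fbar e - ε + 1) * τ' e) + M * τ' e₀ := by
        have h3 : ∀ e, (f x₀ e - fbar e - ε + 1 + M * (if e = e₀ then 1 else 0)) * τ' e
            = (f x₀ e - fbar e - ε + 1) * τ' e + (if e = e₀ then M * τ' e else 0) := by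
          intro e
          split <;> ring
        rw [Finset.sum_congr rfl fun e _ => h3 e, Finset.sum_add_distrib,
          Finset.sum_ite_eq' Finset.univ e₀ (fun e => M * τ' e), if_pos (Finset.mem_univ _)]
      rw [h2] at h1
      linarith
    have hμneg : μ < 0 := by
      rcases hμ0.eq_or_lt with hμeq | h
      · exfalso
        have hμeq' : μ = 0 := hμeq
        have hs0 : s ≤ 0 := by
          have h1 := hμr (Pe ε - 1) (by linarith)
          rw [hμeq', mul_zero] at h1
          exact h1
        have hk0 := hkey x₀ hx₀X
        rw [hμeq', mul_zero, add_zero] at hk0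
        have hterm : ∀ e, ε * (-τ' e) ≤ (f x₀ e - fbar e - ε) * τ' e := by
          intro e
          have h1 : f x₀ e - fbar e - ε ≤ -ε := by linarith [hx₀f e]
          have h2 := mul_le_mul_of_nonpos_right h1 (hτ'0 e)
          linarith
        have hterm' : ∀ e, (0:ℝ) ≤ ε * (-τ' e) := fun e =>
          mul_nonneg hε.le (by linarith [hτ'0 e])
        have hsum0 : ∑ e, ε * (-τ' e) ≤ 0 :=
          le_trans (Finset.sum_le_sum fun e _ => hterm e) (le_trans hk0 hs0)
        have hzero : ∀ e ∈ Finset.univ, ε * (-τ' e) = 0 :=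
          (Finset.sum_eq_zero_iff_of_nonneg fun e _ => hterm' e).mp
            (le_antisymm hsum0 (Finset.sum_nonneg fun e _ => hterm' e))
        have hτz : ∀ e, τ' e = 0 := by
          intro e
          have h9 := hzero e (Finset.mem_univ e)
          have h10 : -τ' e = 0 := by
            rcases mul_eq_zero.mp h9 with h | h
            · exact absurd h (ne_of_gt hε)
            · exact h
          linarith
        have hs0' : 0 ≤ s := by
          have := hkey x₀ hx₀X
          rw [hμeq'] at this
          simp only [hτz, mul_zero, zero_mul, Finset.sum_const_zero, add_zero] at this
          exact this
        have hz₀ : φ (fun e => f x₀ e - fbar e - ε + 1, c x₀ + 1) < s := by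
          refine hφA _ ⟨x₀, hx₀X, fun e => ?_, ?_⟩
          · show f x₀ e - fbar e - ε < f x₀ e - fbar e - ε + 1
            linarith
          · show c x₀ < c x₀ + 1
            linarith
        rw [hrep] at hz₀
        rw [hμeq'] at hz₀
        simp only [hτz, mul_zero, zero_mul, Finset.sum_const_zero, add_zero] at hz₀
        linarith
      · exact h
    set τs : E → ℝ := fun e => τ' e / μ with hτs
    have hτsnn : ∀ e, 0 ≤ τs e := by
      intro e
      rw [hτs]
      dsimp only
      rw [show τ' e / μ = (-τ' e) / (-μ) by rw [neg_div_neg_eq]]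
      exact div_nonneg (by linarith [hτ'0 e]) (by linarith)
    have hmain : ∀ x ∈ X, Pe ε ≤ c x + ∑ e, (f x e - fbar e - ε) * τs e := by
      intro x hx
      have h1 : (∑ e, (f x e - fbar e - ε) * τ' e) + c x * μ ≤ Pe ε * μ :=
        le_trans (hkey x hx) hsμ
      have h3 : ∀ e, (f x e - fbar e - ε) * τs e * μ = (f x e - fbar e - ε) * τ' e := by
        intro e
        rw [hτs]
        dsimp only
        rw [mul_assoc, div_mul_cancel₀ _ (ne_of_lt hμneg)]
      have h2 : (c x + ∑ e, (f x e - fbar e - ε) * τs e) * μ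
          = (∑ e, (f x e - fbar e - ε) * τ' e) + c x * μ := by
        calc (c x + ∑ e, (f x e - fbar e - ε) * τs e) * μ
            = c x * μ + ∑ e, (f x e - fbar e - ε) * τs e * μ := by
              rw [add_mul]
              simp only [Finset.sum_mul]
          _ = c x * μ + ∑ e, (f x e - fbar e - ε) * τ' e := by
              rw [Finset.sum_congr rfl fun e _ => h3 e]
          _ = (∑ e, (f x e - fbar e - ε) * τ' e) + c x * μ := by ring
      have h4 : (c x + ∑ e, (f x e - fbar e - ε) * τs e) * μ ≤ Pe ε * μ := by
        rw [h2]
        exact h1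
      by_contra hcon
      push_neg at hcon
      have := mul_lt_mul_of_neg_right hcon hμneg
      linarith
    set t : E → ℝ := fun e => tbar e + τs e with hT
    obtain ⟨xt, hxtX, hxtval⟩ := hmin t
    have hxtt : ∑ e, f xt e * t e = ∑ w, d w * Tw t w := by
      rw [hswap]
      exact hxtval
    have hsum1 : c xt + ∑ e, (f xt e - fbar e - ε) * τs e
        = ∑ e, f xt e * t e - ∑ e, fbar e * τs e - ε * ∑ e, τs e := by
      have hterm : ∀ e, f xt e * tbar e + (f xt e - fbar e - ε) * τs e
          = f xt e * t e - fbar e * τs e - ε * τs e := by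
        intro e
        rw [hT]
        dsimp only
        ring
      rw [hc]
      dsimp only
      rw [← Finset.sum_add_distrib, Finset.sum_congr rfl fun e _ => hterm e,
        Finset.sum_sub_distrib, Finset.sum_sub_distrib, Finset.mul_sum]
    have hfinal : Pe ε ≤ ∑ w, d w * Tw t w - ∑ e, fbar e * τs e := by
      have h5 := hmain xt hxtX
      have h6 : 0 ≤ ε * ∑ e, τs e := mul_nonneg hε.le (Finset.sum_nonneg fun e _ => hτsnn e)
      rw [hsum1, hxtt] at h5
      linarith
    refine ⟨-∑ w, d w * Tw t w + ∑ e, fbar e * (t e - tbar e), ?_, ?_⟩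
    · rw [hS2def]
      refine ⟨t, fun e => ?_, rfl⟩
      rw [hT]
      dsimp only
      linarith [hτsnn e]
    · have h7 : ∑ e, fbar e * (t e - tbar e) = ∑ e, fbar e * τs e := by
        refine Finset.sum_congr rfl fun e _ => ?_
        rw [hT]
        dsimp only
        ring
      rw [h7]
      linarith
  -- approximation
  have happrox : ∀ η : ℝ, 0 < η → ∃ ε : ℝ, 0 < ε ∧ Pe 0 - η < Pe ε := by
    intro η hη
    by_contra hcon
    push_neg at hcon
    set K : ℕ → Set (P → ℝ) := fun k =>
      {x | x ∈ X ∧ (∀ e, f x e ≤ fbar e + 1 / (k + 1)) ∧ c x ≤ Pe 0 - η / 2} with hK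
    have hKne : ∀ k, (K k).Nonempty := by
      intro k
      have hkpos : (0:ℝ) < 1 / ((k:ℝ) + 1) := by positivity
      have h1 : Pe (1 / ((k:ℝ) + 1)) ≤ Pe 0 - η := hcon _ hkpos
      have h2 : sInf (Se (1 / ((k:ℝ) + 1))) < Pe 0 - η / 2 := by
        have : Pe (1 / ((k:ℝ) + 1)) = sInf (Se (1 / ((k:ℝ) + 1))) := by rw [hPe]
        linarith [this ▸ h1]
      obtain ⟨v, hv, hvlt⟩ := exists_lt_of_csInf_lt (hSene _ hkpos.le) h2
      obtain ⟨x, hx, hxf, rfl⟩ := hv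
      exact ⟨x, hx, hxf, hvlt.le⟩
    have hKanti : ∀ k, K (k + 1) ⊆ K k := by
      intro k x hx
      refine ⟨hx.1, fun e => le_trans (hx.2.1 e) ?_, hx.2.2⟩
      have h1 : (1:ℝ) / ((k:ℝ) + 1 + 1) ≤ 1 / ((k:ℝ) + 1) := by
        apply one_div_le_one_div_of_le
        · positivity
        · linarith
      have h2 : ((k:ℝ) + 1 : ℝ) + 1 = (((k + 1 : ℕ) : ℝ) + 1) := by push_cast; ring
      rw [h2] at h1
      linarith
    have hKclosed : ∀ k, IsClosed (K k) := by
      intro k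
      have hsplit : K k = X ∩ ((⋂ e, {x | f x e ≤ fbar e + 1 / ((k:ℝ) + 1)})
          ∩ {x | c x ≤ Pe 0 - η / 2}) := by
        ext x
        simp only [hK, Set.mem_setOf_eq, Set.mem_inter_iff, Set.mem_iInter]
      rw [hsplit]
      refine hXclosed.inter (IsClosed.inter ?_ ?_)
      · exact isClosed_iInter fun e => isClosed_le (hfc e) continuous_const
      · exact isClosed_le hcc continuous_const
    have hKcpt : IsCompact (K 0) :=
      hXcompact.of_isClosed_subset (hKclosed 0) fun x hx => hx.1
    obtain ⟨x, hxmem⟩ := IsCompact.nonempty_iInter_of_sequence_nonempty_isCompact_isClosed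
      K hKanti hKne hKcpt hKclosed
    simp only [Set.mem_iInter] at hxmem
    have hxX : x ∈ X := (hxmem 0).1
    have hxf : ∀ e, f x e ≤ fbar e := by
      intro e
      refine le_of_forall_pos_le_add fun δ hδ => ?_
      obtain ⟨k, hk⟩ := exists_nat_one_div_lt hδ
      calc f x e ≤ fbar e + 1 / ((k:ℝ) + 1) := (hxmem k).2.1 e
        _ ≤ fbar e + δ := by linarith
    have hP0 : Pe 0 ≤ c x := by
      have : c x ∈ Se 0 := ⟨x, hxX, fun e => by linarith [hxf e], rfl⟩
      exact csInf_le (hSebdd 0) this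
    linarith [(hxmem 0).2.2]
  -- conclusion
  rw [hS1]
  have hge : sInf S2 ≤ -(Pe 0) := by
    refine le_of_forall_pos_le_add fun η hη => ?_
    obtain ⟨ε, hε, hPε⟩ := happrox η hη
    obtain ⟨v, hv, hvle⟩ := hslater ε hε
    calc sInf S2 ≤ v := csInf_le hS2bdd hv
      _ ≤ -(Pe ε) := hvle
      _ ≤ -(Pe 0) + η := by linarith
  have hle : -(Pe 0) ≤ sInf S2 := le_csInf hS2ne fun v hv => by linarith [hweak v hv]
  have : sInf S2 = -(Pe 0) := le_antisymm hge hle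
  rw [this, neg_neg, hPe]
end
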